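/- arXiv:1607.07629 — 4 statements merged into one kernel-verified Lean document; each statement's English description precedes it below -/
import Mathlib

section
/- If the I-symbolic topology on N is equivalent to the I-adic topology on N, then for every N-proper ideal J of R with I ⊆ J and Ass_R(N/JN) = mAss_R(N/JN), the I-symbolic topology on N is finer than the J-symbolic topology on N; that is, for every l ≥ 0 there exists m ≥ 0 with (IN)^(m) ⊆ (JN)^(l). -/
open Ideal

/-- The set of minimal associated primes of an `R`-module `M`. -/
def mAss (R : Type*) [CommRing R] (M : Type*) [AddCommGroup M] [Module R M] : Set (Ideal R) :=
  {p | Minimal (· ∈ associatedPrimes R M) p}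

/-- The `n`-th symbolic power of `I` with respect to `N`:
elements `x ∈ N` with `s • x ∈ I ^ n • N` for some `s` outside every minimal prime of
`Ass_R (N / I N)`. -/
def symbPow (R : Type*) [CommRing R] (I : Ideal R) (N : Type*) [AddCommGroup N] [Module R N]
    (n : ℕ) : Set N :=
  {x | ∃ s : R, (∀ p ∈ mAss R (N ⧸ (I • ⊤ : Submodule R N)), s ∉ p) ∧
    s • x ∈ (I ^ n • ⊤ : Submodule R N)}

/-- The `I`-symbolic topology on `N` is equivalent to the `I`-adic topology on `N`. -/
def symbEquivAdic (R : Type*) [CommRing R] (I : Ideal R) (N : Type*) [AddCommGroup N]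
    [Module R N] : Prop :=
  ∀ n : ℕ, ∃ m : ℕ, symbPow R I N m ⊆ (I ^ n • ⊤ : Submodule R N)

theorem stmt2 (R : Type*) [CommRing R] [IsNoetherianRing R] (I : Ideal R)
    (N : Type*) [AddCommGroup N] [Module R N] [Module.Finite R N]
    (hI : (I • ⊤ : Submodule R N) ≠ ⊤)
    (heq : symbEquivAdic R I N)
    (J : Ideal R) (hJ : (J • ⊤ : Submodule R N) ≠ ⊤) (hIJ : I ≤ J)
    (hass : associatedPrimes R (N ⧸ (J • ⊤ : Submodule R N)) =
      mAss R (N ⧸ (J • ⊤ : Submodule R N))) :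
    ∀ l : ℕ, ∃ m : ℕ, symbPow R I N m ⊆ symbPow R J N l := by
  intro l
  obtain ⟨m, hm⟩ := heq l
  refine ⟨m, fun x hx => ⟨1, fun p hp => ?_, ?_⟩⟩
  · exact (Ideal.ne_top_iff_one p).mp hp.prop.1.ne_top
  · have : x ∈ (I ^ l • ⊤ : Submodule R N) := hm hx
    simpa using Submodule.smul_mono_left (Ideal.pow_right_mono hIJ l) this
end

section
/- Let p₁, ..., p_n be the minimal primes of Ass_R(N/IN). Then the minimal primes of Ass_R(N/(p₁⋯p_n)N) equal the union over i of the minimal primes of Ass_R(N/p_i N), and this union equals {p₁, ..., p_n}. -/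
open Ideal

/-!
Over a Noetherian ring the minimal associated primes of a finite module `M` are the minimal
primes of `Ann M`, and `Supp (N / J N) = Supp N ∩ V(J)` shows that `Ann (N / J N)` and
`Ann N + J` lie in the same primes. So everything is a statement about minimal primes of ideals:
the `pᵢ` are pairwise incomparable primes containing `Ann N`, hence `Ann N + pᵢ = pᵢ`, and a
prime contains `Ann N + p₁ ⋯ pₙ` iff it contains some `pᵢ`.
-/

theorem IsAntichain.minimal_and_exists_le_iff {α : Type*} [PartialOrder α] {A : Set α}
    (hA : IsAntichain (· ≤ ·) A) {P : α → Prop} (hP : ∀ a ∈ A, P a) {x : α} :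
    Minimal (fun y => P y ∧ ∃ a ∈ A, a ≤ y) x ↔ x ∈ A := by
  constructor
  · intro hx
    obtain ⟨a, ha, hax⟩ := hx.prop.2
    rwa [hx.eq_of_ge ⟨hP a ha, a, ha, le_rfl⟩ hax]
  · intro hx
    refine ⟨⟨hP x hx, x, hx, le_rfl⟩, fun y ⟨_, a, ha, hay⟩ hyx => ?_⟩
    rwa [hA.eq ha hx (hay.trans hyx)] at hay

section

variable {R : Type*} [CommRing R]

theorem Ideal.minimalPrimes_sup_prod {A : Ideal R} {s : Finset (Ideal R)}
    (hs : IsAntichain (· ≤ ·) (s : Set (Ideal R))) (hprime : ∀ p ∈ s, p.IsPrime)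
    (hA : ∀ p ∈ s, A ≤ p) :
    (A ⊔ ∏ p ∈ s, p).minimalPrimes = s := by
  have key : ∀ q : Ideal R,
      (q.IsPrime ∧ A ⊔ ∏ p ∈ s, p ≤ q) ↔ (q.IsPrime ∧ ∃ p ∈ (s : Set (Ideal R)), p ≤ q) :=
    fun q => and_congr_right fun hq => by
      rw [sup_le_iff, hq.prod_le]
      exact ⟨And.right, fun ⟨p, hp, hpq⟩ => ⟨(hA p hp).trans hpq, p, hp, hpq⟩⟩
  ext q
  simp only [Set.mem_ofPred_eq, Ideal.IsMinimalPrime, key]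
  exact hs.minimal_and_exists_le_iff hprime

theorem mAss_eq_minimalPrimes_annihilator [IsNoetherianRing R] (M : Type*) [AddCommGroup M]
    [Module R M] [Module.Finite R M] :
    mAss R M = (Module.annihilator R M).minimalPrimes := by
  ext p
  simp only [mAss, Set.mem_ofPred_eq, Ideal.IsMinimalPrime]
  refine (minimal_iff_minimal_of_imp_of_forall (fun q hq => ?_) fun q ⟨hq, hle⟩ => ?_).symm
  · have hq := AssociatedPrimes.mem_iff.mp hq
    exact ⟨hq.isPrime, Submodule.annihilator_top.symm.trans_le hq.annihilator_le⟩
  · obtain ⟨m, hm, hmq⟩ := Ideal.exists_minimalPrimes_le (J := q) hle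
    exact ⟨m, hmq,
      Module.associatedPrimes.minimalPrimes_annihilator_subset_associatedPrimes R M hm⟩

variable {N : Type*} [AddCommGroup N] [Module R N] [Module.Finite R N]

theorem annihilator_quotient_smul_top_le_iff (J : Ideal R) {q : Ideal R} (hq : q.IsPrime) :
    Module.annihilator R (N ⧸ (J • ⊤ : Submodule R N)) ≤ q ↔
      Module.annihilator R N ⊔ J ≤ q := by
  rw [← Module.mem_support_iff_of_finite (p := ⟨q, hq⟩), Module.support_quotient,
    Set.mem_inter_iff, Module.mem_support_iff_of_finite, PrimeSpectrum.mem_zeroLocus,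
    sup_le_iff]
  rfl

theorem mAss_quotient_smul_top [IsNoetherianRing R] (J : Ideal R) :
    mAss R (N ⧸ (J • ⊤ : Submodule R N)) = (Module.annihilator R N ⊔ J).minimalPrimes := by
  rw [mAss_eq_minimalPrimes_annihilator]
  ext q
  simp only [Set.mem_ofPred_eq, Ideal.IsMinimalPrime]
  congr! 2 with r
  exact and_congr_right (annihilator_quotient_smul_top_le_iff J)

end

theorem stmt3_general (R : Type*) [CommRing R] [IsNoetherianRing R] (I : Ideal R)
    (N : Type*) [AddCommGroup N] [Module R N] [Module.Finite R N]
    (ps : Finset (Ideal R))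
    (h : mAss R (N ⧸ (I • ⊤ : Submodule R N)) = ↑ps) :
    mAss R (N ⧸ ((∏ p ∈ ps, p) • ⊤ : Submodule R N)) =
      (⋃ p ∈ ps, mAss R (N ⧸ (p • ⊤ : Submodule R N))) ∧
    (⋃ p ∈ ps, mAss R (N ⧸ (p • ⊤ : Submodule R N))) = ↑ps := by
  rw [mAss_quotient_smul_top] at h
  have hmin : ∀ p ∈ ps, (Module.annihilator R N ⊔ I).IsMinimalPrime p := fun p hp =>
    (h.symm ▸ hp : p ∈ (Module.annihilator R N ⊔ I).minimalPrimes)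
  have hann : ∀ p ∈ ps, Module.annihilator R N ≤ p := fun p hp =>
    le_sup_left.trans (hmin p hp).le
  have hsingle : ∀ p ∈ ps, mAss R (N ⧸ (p • ⊤ : Submodule R N)) = {p} := fun p hp => by
    have := (hmin p hp).isPrime
    rw [mAss_quotient_smul_top, sup_eq_right.mpr (hann p hp), minimalPrimes_eq_subsingleton_self]
  have hunion : ⋃ p ∈ ps, mAss R (N ⧸ (p • ⊤ : Submodule R N)) = ↑ps := by
    rw [Set.iUnion₂_congr hsingle]
    exact Set.biUnion_of_singleton (ps : Set (Ideal R))
  refine ⟨?_, hunion⟩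
  rw [hunion, mAss_quotient_smul_top]
  exact minimalPrimes_sup_prod (h ▸ setOfPred_minimal_antichain _)
    (fun p hp => (hmin p hp).isPrime) hann

theorem stmt3 (R : Type*) [CommRing R] [IsNoetherianRing R] (I : Ideal R)
    (N : Type*) [AddCommGroup N] [Module R N] [Module.Finite R N] [Nontrivial N]
    (hI : (I • ⊤ : Submodule R N) ≠ ⊤)
    (ps : Finset (Ideal R))
    (h : mAss R (N ⧸ (I • ⊤ : Submodule R N)) = ↑ps) :
    mAss R (N ⧸ ((∏ p ∈ ps, p) • ⊤ : Submodule R N)) =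
      (⋃ p ∈ ps, mAss R (N ⧸ (p • ⊤ : Submodule R N))) ∧
    (⋃ p ∈ ps, mAss R (N ⧸ (p • ⊤ : Submodule R N))) = ↑ps :=
  stmt3_general R I N ps h
end

section
/- Let I₁ and I₂ be N-proper ideals of R such that mAss_R(N/(I₁I₂)N) = mAss_R(N/I₁N) ∪ mAss_R(N/I₂N). If for i = 1, 2 the I_i-symbolic topology on N is equivalent to the I_i-adic topology on N, then the (I₁I₂)-symbolic topology on N is equivalent to the (I₁I₂)-adic topology on N, and the (I₁ ∩ I₂)-symbolic topology on N is equivalent to the (I₁ ∩ I₂)-adic topology on N. -/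
open Ideal

/-!
A symbolic power of `I₁ * I₂` lies in symbolic powers of `I₁` and of `I₂`, since every minimal
associated prime of `N / I₁N` or `N / I₂N` is one of `N / I₁I₂N`. Since both topologies are
adic, it therefore lies in `I₁ ^ (n + k) N ∩ I₂ ^ n N`, and Artin–Rees for `I₁` and the
submodule `I₂ ^ n N` puts this inside `I₁ ^ n I₂ ^ n N`. For `I₁ ⊓ I₂`, the inclusions
`(I₁ ⊓ I₂) ^ 2 ≤ I₁ * I₂ ≤ I₁ ⊓ I₂` give the annihilators of `N / (I₁ ⊓ I₂)N` and `N / I₁I₂N`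
the same radical, hence the same minimal associated primes, so the `(I₁ ⊓ I₂)`-symbolic
filtration is cofinal with the `I₁ * I₂`-symbolic one.
-/

namespace Submodule

variable {R : Type*} [CommRing R] {N : Type*} [AddCommGroup N] [Module R N]

theorem le_annihilator_quotient_iff {J : Ideal R} {P : Submodule R N} :
    J ≤ Module.annihilator R (N ⧸ P) ↔ J • (⊤ : Submodule R N) ≤ P := by
  rw [annihilator_quotient, smul_le]
  exact ⟨fun h r hr x _ ↦ mem_colon.mp (h hr) x trivial, fun h r hr ↦ mem_colon.mpr
    fun x _ ↦ h r hr x trivial⟩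

theorem pow_smul_le_pow_smul_of_smul_le {I J : Ideal R} {P : Submodule R N}
    (h : J • P ≤ I • P) (k : ℕ) : J ^ k • P ≤ I ^ k • P := by
  induction k with
  | zero => simp
  | succ k ih =>
    calc J ^ (k + 1) • P = J ^ k • J • P := by rw [pow_succ, mul_smul]
      _ ≤ J ^ k • I • P := smul_mono_right _ h
      _ = I • J ^ k • P := by rw [← mul_smul, ← mul_smul, mul_comm]
      _ ≤ I • I ^ k • P := smul_mono_right _ ih
      _ = I ^ (k + 1) • P := by rw [pow_succ', mul_smul]

end Submodule

section

variable {R : Type*} [CommRing R] {N : Type*} [AddCommGroup N] [Module R N]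

theorem annihilator_le_of_mem_associatedPrimes {p : Ideal R} (hp : p ∈ associatedPrimes R N) :
    Module.annihilator R N ≤ p :=
  Submodule.annihilator_top (R := R) (M := N) ▸ hp.annihilator_le

theorem symbPow_subset_symbPow {I J : Ideal R} {m n : ℕ}
    (hass : mAss R (N ⧸ (I • ⊤ : Submodule R N)) ⊆ mAss R (N ⧸ (J • ⊤ : Submodule R N)))
    (hpow : J ^ m ≤ I ^ n) : symbPow R J N m ⊆ symbPow R I N n :=
  fun _ ⟨s, hs, hsx⟩ ↦ ⟨s, fun p hp ↦ hs p (hass hp), Submodule.smul_mono_left hpow hsx⟩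

variable [IsNoetherianRing R] [Module.Finite R N]

theorem mAss_eq_minimalPrimes_annihilator_s4 :
    mAss R N = (Module.annihilator R N).minimalPrimes := by
  have hsub := Module.associatedPrimes.minimalPrimes_annihilator_subset_associatedPrimes R N
  ext p
  constructor
  · rintro ⟨hp, hmin⟩
    refine ⟨⟨hp.isPrime, annihilator_le_of_mem_associatedPrimes hp⟩, fun q hq hqp ↦ ?_⟩
    have := hq.1
    obtain ⟨q', hq', hq'q⟩ := Ideal.exists_minimalPrimes_le hq.2
    exact (hmin (hsub hq') (hq'q.trans hqp)).trans hq'q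
  · intro hp
    exact ⟨hsub hp, fun q hq hqp ↦
      hp.2 ⟨hq.isPrime, annihilator_le_of_mem_associatedPrimes hq⟩ hqp⟩

theorem mAss_quotient_smul_top_eq {a b : Ideal R} {k : ℕ} (hab : a ≤ b) (hba : b ^ k ≤ a) :
    mAss R (N ⧸ (a • ⊤ : Submodule R N)) = mAss R (N ⧸ (b • ⊤ : Submodule R N)) := by
  set A := Module.annihilator R (N ⧸ (a • ⊤ : Submodule R N))
  set B := Module.annihilator R (N ⧸ (b • ⊤ : Submodule R N))
  have hAB : A ≤ B := Submodule.le_annihilator_quotient_iff.mpr <|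
    (Submodule.le_annihilator_quotient_iff.mp le_rfl).trans (Submodule.smul_mono_left hab)
  have hBA : B ^ k ≤ A := Submodule.le_annihilator_quotient_iff.mpr <|
    (Submodule.pow_smul_le_pow_smul_of_smul_le
      (Submodule.le_annihilator_quotient_iff.mp le_rfl) k).trans (Submodule.smul_mono_left hba)
  have hrad : A.radical = B.radical :=
    le_antisymm (Ideal.radical_mono hAB) <| Ideal.radical_le_radical_iff.mpr
      fun r hr ↦ ⟨k, hBA (Ideal.pow_mem_pow hr k)⟩
  rw [mAss_eq_minimalPrimes_annihilator_s4, mAss_eq_minimalPrimes_annihilator_s4,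
    ← Ideal.radical_minimalPrimes, hrad, Ideal.radical_minimalPrimes]

theorem exists_pow_smul_top_inf_le_mul_pow_smul_top (I J : Ideal R) (n : ℕ) :
    ∃ k, (I ^ (n + k) • ⊤ ⊓ J ^ n • ⊤ : Submodule R N) ≤ (I * J) ^ n • ⊤ := by
  obtain ⟨k, hk⟩ := Ideal.exists_pow_inf_eq_pow_smul I (J ^ n • ⊤ : Submodule R N)
  refine ⟨k, ?_⟩
  rw [hk (n + k) (Nat.le_add_left k n), Nat.add_sub_cancel, mul_pow, mul_smul]
  exact smul_mono_right _ inf_le_right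

theorem symbEquivAdic_mul {I J : Ideal R}
    (hI : mAss R (N ⧸ (I • ⊤ : Submodule R N)) ⊆ mAss R (N ⧸ ((I * J) • ⊤ : Submodule R N)))
    (hJ : mAss R (N ⧸ (J • ⊤ : Submodule R N)) ⊆ mAss R (N ⧸ ((I * J) • ⊤ : Submodule R N)))
    (heI : symbEquivAdic R I N) (heJ : symbEquivAdic R J N) : symbEquivAdic R (I * J) N := by
  intro n
  obtain ⟨k, hk⟩ := exists_pow_smul_top_inf_le_mul_pow_smul_top (N := N) I J n
  obtain ⟨mI, hmI⟩ := heI (n + k)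
  obtain ⟨mJ, hmJ⟩ := heJ n
  refine ⟨max mI mJ, fun x hx ↦ hk ⟨hmI ?_, hmJ ?_⟩⟩
  · refine symbPow_subset_symbPow hI ?_ hx
    exact (Ideal.pow_right_mono Ideal.mul_le_left _).trans
      (Ideal.pow_le_pow_right (le_max_left _ _))
  · refine symbPow_subset_symbPow hJ ?_ hx
    exact (Ideal.pow_right_mono Ideal.mul_le_right _).trans
      (Ideal.pow_le_pow_right (le_max_right _ _))

theorem symbEquivAdic_inf_of_mul {I J : Ideal R} (h : symbEquivAdic R (I * J) N) :
    symbEquivAdic R (I ⊓ J) N := by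
  have hsq : (I ⊓ J) ^ 2 ≤ I * J :=
    (sq (I ⊓ J)).le.trans (Ideal.mul_mono inf_le_left inf_le_right)
  intro n
  obtain ⟨m, hm⟩ := h n
  refine ⟨2 * m, fun x hx ↦ Submodule.smul_mono_left (Ideal.pow_right_mono Ideal.mul_le_inf n)
    (hm (symbPow_subset_symbPow (mAss_quotient_smul_top_eq Ideal.mul_le_inf hsq).le ?_ hx))⟩
  rw [pow_mul]
  exact Ideal.pow_right_mono hsq m

end

theorem stmt4_general (R : Type*) [CommRing R] [IsNoetherianRing R]
    (N : Type*) [AddCommGroup N] [Module R N] [Module.Finite R N]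
    (I₁ I₂ : Ideal R)
    (hass : mAss R (N ⧸ ((I₁ * I₂) • ⊤ : Submodule R N)) =
      mAss R (N ⧸ (I₁ • ⊤ : Submodule R N)) ∪ mAss R (N ⧸ (I₂ • ⊤ : Submodule R N)))
    (he₁ : symbEquivAdic R I₁ N) (he₂ : symbEquivAdic R I₂ N) :
    symbEquivAdic R (I₁ * I₂) N ∧ symbEquivAdic R (I₁ ⊓ I₂) N := by
  have hmul : symbEquivAdic R (I₁ * I₂) N :=
    symbEquivAdic_mul (hass ▸ Set.subset_union_left) (hass ▸ Set.subset_union_right) he₁ he₂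
  exact ⟨hmul, symbEquivAdic_inf_of_mul hmul⟩

theorem stmt4 (R : Type*) [CommRing R] [IsNoetherianRing R]
    (N : Type*) [AddCommGroup N] [Module R N] [Module.Finite R N] [Nontrivial N]
    (I₁ I₂ : Ideal R)
    (h₁ : (I₁ • ⊤ : Submodule R N) ≠ ⊤) (h₂ : (I₂ • ⊤ : Submodule R N) ≠ ⊤)
    (hass : mAss R (N ⧸ ((I₁ * I₂) • ⊤ : Submodule R N)) =
      mAss R (N ⧸ (I₁ • ⊤ : Submodule R N)) ∪ mAss R (N ⧸ (I₂ • ⊤ : Submodule R N)))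
    (he₁ : symbEquivAdic R I₁ N) (he₂ : symbEquivAdic R I₂ N) :
    symbEquivAdic R (I₁ * I₂) N ∧ symbEquivAdic R (I₁ ⊓ I₂) N :=
  stmt4_general R N I₁ I₂ hass he₁ he₂
end

section
/- Let (R, m) be a complete Noetherian local ring, N a non-zero finitely generated R-module, and p ∈ Supp(N) a prime with dim R/p = 1. Then the p-adic topology on N is equivalent to the p-symbolic topology on N if and only if every associated prime of N is contained in p. -/
/-!
Because `p ⊇ Ann N`, `p` is the only minimal associated prime of `N ⧸ pN`, so the symbolic power
`(pN)^(n)` is the `p`-saturation of `p ^ n N`. These saturations intersect in zero exactly when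
every associated prime of `N` lies in `p`, and equivalence of the topologies forces a zero
intersection by Krull's intersection theorem. Conversely, over the complete local ring `R`,
Chevalley's lemma puts deep saturations inside `𝔪 ^ k N` for every `k`; as `dim R/p = 1`, a power
of `𝔪` carries the saturation of `p ^ n N` into `p ^ n N`, and Artin–Rees then shows that the
saturation meets `𝔪 ^ k N` inside `p ^ n N` for large `k`.
-/

open Ideal

namespace Submodule

variable {R M : Type*} [CommRing R] [AddCommGroup M] [Module R M]

def saturation (U : Submodule R M) (p : Ideal R) [p.IsPrime] : Submodule R M where
  carrier := {x | ∃ s ∉ p, s • x ∈ U}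
  add_mem' := by
    rintro x y ⟨s, hs, hx⟩ ⟨t, ht, hy⟩
    refine ⟨t * s, p.primeCompl.mul_mem ht hs, ?_⟩
    rw [smul_add, mul_smul, mul_comm, mul_smul]
    exact add_mem (U.smul_mem t hx) (U.smul_mem s hy)
  zero_mem' := ⟨1, p.primeCompl.one_mem, by simp⟩
  smul_mem' := by
    rintro r x ⟨s, hs, hx⟩
    exact ⟨s, hs, by rw [smul_comm]; exact U.smul_mem r hx⟩

variable {p : Ideal R} [p.IsPrime] {U V : Submodule R M}

theorem mem_saturation {x : M} : x ∈ U.saturation p ↔ ∃ s ∉ p, s • x ∈ U := Iff.rfl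

theorem saturation_mono (h : U ≤ V) : U.saturation p ≤ V.saturation p :=
  fun _ ⟨s, hs, hx⟩ => ⟨s, hs, h hx⟩

theorem exists_smul_mem_of_le_saturation {T : Submodule R M} (hT : T.FG)
    (h : T ≤ U.saturation p) : ∃ s ∉ p, ∀ x ∈ T, s • x ∈ U := by
  classical
  obtain ⟨S, rfl⟩ := hT
  have hS : ¬ S.inf (fun x => U.colon {x}) ≤ p := by
    rw [‹p.IsPrime›.inf_le']
    rintro ⟨x, hx, hle⟩
    obtain ⟨s, hs, hsx⟩ := h (subset_span hx)
    exact hs (hle (mem_colon_singleton.mpr hsx))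
  obtain ⟨s, hsS, hs⟩ := SetLike.not_le_iff_exists.mp hS
  have hs_colon : s ∈ U.colon (span R (S : Set M)) := by
    rw [colon_span]
    exact mem_colon.mpr fun y hy => mem_colon_singleton.mp
      (Finset.inf_le (f := fun x => U.colon {x}) hy hsS)
  exact ⟨s, hs, mem_colon.mp hs_colon⟩

end Submodule

open Submodule

/-- Cayley–Hamilton for `s • id` gives a monic `f` with lower coefficients in `p` and
`f(s) • M = 0`, while `f(s) ≡ s ^ deg f` modulo `p`. -/
theorem Module.annihilator_not_le_of_smul_mem_smul_top {R M : Type*} [CommRing R]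
    [AddCommGroup M] [Module R M] [Module.Finite R M] {p : Ideal R} [p.IsPrime] {s : R}
    (hs : s ∉ p) (h : ∀ x : M, s • x ∈ p • (⊤ : Submodule R M)) :
    ¬ Module.annihilator R M ≤ p := by
  have hrange : LinearMap.range (algebraMap R (Module.End R M) s) ≤ p • ⊤ := by
    rintro _ ⟨x, rfl⟩
    simpa using h x
  obtain ⟨f, hf, -, hcoeff, hf0⟩ :=
    LinearMap.exists_monic_and_natDegree_eq_and_coeff_mem_pow_and_aeval_eq_zero R _ p hrange
  have hdist : f.IsDistinguishedAt p :=
    ⟨⟨fun hk => Ideal.pow_le_self (Nat.sub_ne_zero_of_lt hk) (hcoeff _)⟩, hf⟩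
  have hann : f.eval s ∈ Module.annihilator R M := by
    refine Module.mem_annihilator.mpr fun x => ?_
    rw [Polynomial.aeval_algebraMap_apply, Polynomial.coe_aeval_eq_eval] at hf0
    simpa using LinearMap.congr_fun hf0 x
  have hmk : Ideal.Quotient.mk p (f.eval s) = Ideal.Quotient.mk p s ^ f.natDegree := by
    rw [← Polynomial.eval₂_at_apply, ← Polynomial.eval_map, hdist.map_eq_X_pow,
      Polynomial.eval_X_pow]
  intro hle
  have hpow : Ideal.Quotient.mk p s ^ f.natDegree = 0 :=
    hmk ▸ Ideal.Quotient.eq_zero_iff_mem.mpr (hle hann)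
  exact hs (Ideal.Quotient.eq_zero_iff_mem.mp (eq_zero_of_pow_eq_zero hpow))

theorem le_of_mem_associatedPrimes_quotient_smul_top {R M : Type*} [CommRing R] [AddCommGroup M]
    [Module R M] {I z : Ideal R}
    (hz : z ∈ associatedPrimes R (M ⧸ I • (⊤ : Submodule R M))) : I ≤ z := by
  have hI : (I : Set R) ⊆ Module.annihilator R (M ⧸ I • (⊤ : Submodule R M)) :=
    (Module.isTorsionBySet_iff_subset_annihilator _ _).mp
      (Module.isTorsionBySet_quotient_ideal_smul M I)
  exact hI.trans ((annihilator_top (R := R)).symm.trans_le hz.annihilator_le)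

section SymbolicPowers

variable {R M : Type*} [CommRing R] [IsNoetherianRing R] [AddCommGroup M] [Module R M]
  [Module.Finite R M] {p : Ideal R} [p.IsPrime]

theorem mem_associatedPrimes_quotient_smul_top (hp : Module.annihilator R M ≤ p) :
    p ∈ associatedPrimes R (M ⧸ p • (⊤ : Submodule R M)) := by
  apply Module.associatedPrimes.minimalPrimes_annihilator_subset_associatedPrimes
  have hsupp : (⟨p, ‹_›⟩ : PrimeSpectrum R) ∈ Module.support R (M ⧸ p • (⊤ : Submodule R M)) := by
    rw [Module.support_quotient]
    exact ⟨Module.mem_support_iff_of_finite.mpr hp, Set.Subset.rfl⟩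
  have hle : p ≤ Module.annihilator R (M ⧸ p • (⊤ : Submodule R M)) :=
    (Module.isTorsionBySet_iff_subset_annihilator _ _).mp
      (Module.isTorsionBySet_quotient_ideal_smul M p)
  exact ⟨⟨‹_›, Module.mem_support_iff_of_finite.mp hsupp⟩, fun q hq _ => hle.trans hq.2⟩

theorem mAss_quotient_smul_top_s10 (hp : Module.annihilator R M ≤ p) :
    mAss R (M ⧸ p • (⊤ : Submodule R M)) = {p} := by
  have hmem := mem_associatedPrimes_quotient_smul_top hp
  ext q
  refine ⟨fun hq => ?_, fun hq => ?_⟩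
  · exact le_antisymm (hq.2 hmem (le_of_mem_associatedPrimes_quotient_smul_top hq.1))
      (le_of_mem_associatedPrimes_quotient_smul_top hq.1)
  · rw [Set.mem_singleton_iff.mp hq]
    exact ⟨hmem, fun z hz _ => le_of_mem_associatedPrimes_quotient_smul_top hz⟩

theorem symbPow_eq_saturation (hp : Module.annihilator R M ≤ p) (n : ℕ) :
    symbPow R p M n = (p ^ n • ⊤ : Submodule R M).saturation p := by
  ext x
  simp [symbPow, mAss_quotient_smul_top_s10 hp, mem_saturation]

theorem symbEquivAdic_iff (hp : Module.annihilator R M ≤ p) :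
    symbEquivAdic R p M ↔
      ∀ n, ∃ m, (p ^ m • ⊤ : Submodule R M).saturation p ≤ p ^ n • ⊤ := by
  simp only [symbEquivAdic, symbPow_eq_saturation hp, SetLike.coe_subset_coe]

end SymbolicPowers

section IntersectionOfSaturations

variable {R M : Type*} [CommRing R] [IsNoetherianRing R] [AddCommGroup M] [Module R M]
  [Module.Finite R M] {p : Ideal R} [p.IsPrime]

/-- By Artin–Rees, every element of the intersection `C` is moved into `p • C` by some `s ∉ p`;
the determinant trick then produces a single `t ∉ p` killing `C`. -/
theorem iInf_saturation_pow_smul_top_eq_bot_iff :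
    ⨅ n, (p ^ n • ⊤ : Submodule R M).saturation p = ⊥ ↔ ∀ z ∈ associatedPrimes R M, z ≤ p := by
  constructor
  · intro h z hz
    obtain ⟨hz, x, rfl⟩ := isAssociatedPrime_iff.mp hz
    by_contra hzp
    obtain ⟨s, hsx, hs⟩ := SetLike.not_le_iff_exists.mp hzp
    rw [mem_colon_singleton, mem_bot] at hsx
    have hx : x ∈ ⨅ n, (p ^ n • ⊤ : Submodule R M).saturation p :=
      mem_iInf _ |>.mpr fun n => ⟨s, hs, by simp [hsx]⟩
    rw [h, mem_bot] at hx
    exact hz.ne_top (by simp [hx])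
  · intro hAss
    set C := ⨅ n, (p ^ n • ⊤ : Submodule R M).saturation p
    obtain ⟨c, hc⟩ := Ideal.exists_pow_inf_eq_pow_smul p C
    have hC : C ≤ (p • C).saturation p := fun x hx => by
      obtain ⟨s, hs, hsx⟩ := (mem_iInf _).mp hx (c + 1)
      have hsx' : s • x ∈ p ^ (c + 1) • ⊤ ⊓ C := ⟨hsx, C.smul_mem s hx⟩
      rw [hc (c + 1) (by omega), Nat.add_sub_cancel_left, pow_one] at hsx'
      exact ⟨s, hs, (smul_mono_right p inf_le_right : p • (_ ⊓ C) ≤ p • C) hsx'⟩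
    obtain ⟨s, hs, hsC⟩ := exists_smul_mem_of_le_saturation (IsNoetherian.noetherian C) hC
    obtain ⟨t, htC, ht⟩ := SetLike.not_le_iff_exists.mp
      (Module.annihilator_not_le_of_smul_mem_smul_top (M := C) hs
        fun x => (mem_smul_top_iff p C _).mpr (hsC x x.2))
    refine eq_bot_iff.mpr fun x hx => (mem_bot R).mpr ?_
    by_contra hx0
    obtain ⟨P, hP, hxP⟩ := exists_le_isAssociatedPrime_of_isNoetherianRing R x hx0
    have htx : t • x = 0 := congrArg Subtype.val (Module.mem_annihilator.mp htC ⟨x, hx⟩)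
    exact ht (hAss P hP (hxP (by simp [htx])))

end IntersectionOfSaturations

open IsLocalRing

theorem IsLocalRing.eq_maximalIdeal_of_lt_of_ringKrullDim_quotient_le_one {R : Type*}
    [CommRing R] [IsLocalRing R] {p q : Ideal R} [p.IsPrime] [q.IsPrime]
    (hdim : ringKrullDim (R ⧸ p) ≤ 1) (hpq : p < q) : q = maximalIdeal R := by
  by_contra hq
  have hqm : q < maximalIdeal R := lt_of_le_of_ne (le_maximalIdeal IsPrime.ne_top') hq
  let point (I : Ideal R) [I.IsPrime] (hI : p ≤ I) : PrimeSpectrum.zeroLocus (p : Set R) :=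
    ⟨⟨I, ‹_›⟩, hI⟩
  let chain : LTSeries (PrimeSpectrum.zeroLocus (p : Set R)) :=
    ((RelSeries.singleton _ (point p le_rfl)).snoc (point q hpq.le) hpq).snoc
      (point (maximalIdeal R) (hpq.le.trans hqm.le)) (by exact hqm)
  have hlen : ((chain.length : ℕ) : WithBot ℕ∞) ≤ 1 :=
    ((Order.LTSeries.length_le_krullDim chain).trans_eq (ringKrullDim_quotient p).symm).trans hdim
  exact absurd hlen (by norm_num [show chain.length = 2 from rfl])

section OneDimensional

variable {R M : Type*} [CommRing R] [IsNoetherianRing R] [IsLocalRing R] [AddCommGroup M]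
  [Module R M] [Module.Finite R M] {p : Ideal R} [p.IsPrime]

/-- Every prime containing `U.colon (U.saturation p)` contains `p ^ n` and an element outside `p`,
so it strictly contains `p` and is therefore maximal: the colon ideal is `𝔪`-primary. -/
theorem exists_maximalIdeal_pow_smul_saturation_le
    (hmax : ∀ q : Ideal R, q.IsPrime → p < q → q = maximalIdeal R) {U : Submodule R M} {n : ℕ}
    (hU : p ^ n • ⊤ ≤ U) : ∃ t, maximalIdeal R ^ t • U.saturation p ≤ U := by
  obtain ⟨s, hs, hsU⟩ := exists_smul_mem_of_le_saturation
    (IsNoetherian.noetherian (U.saturation p)) le_rfl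
  set J := U.colon (U.saturation p : Set M)
  have hsJ : s ∈ J := mem_colon.mpr hsU
  have hpJ : p ^ n ≤ J := fun a ha => mem_colon.mpr fun x _ => hU (smul_mem_smul ha mem_top)
  have hmJ : maximalIdeal R ≤ J.radical := by
    rw [Ideal.radical_eq_sInf]
    refine le_sInf fun q ⟨hJq, hq⟩ => (hmax q hq ?_).ge
    exact lt_of_le_of_ne (Ideal.IsPrime.le_of_pow_le (hpJ.trans hJq))
      fun hpq => hs (hpq ▸ hJq hsJ)
  obtain ⟨t, ht⟩ := Ideal.exists_pow_le_of_le_radical_of_fg hmJ (IsNoetherian.noetherian _)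
  exact ⟨t, smul_le.mpr fun a ha x hx => mem_colon.mp (ht ha) x hx⟩

theorem exists_maximalIdeal_pow_smul_top_inf_saturation_le
    (hmax : ∀ q : Ideal R, q.IsPrime → p < q → q = maximalIdeal R) {U : Submodule R M} {n : ℕ}
    (hU : p ^ n • ⊤ ≤ U) : ∃ k, maximalIdeal R ^ k • ⊤ ⊓ U.saturation p ≤ U := by
  obtain ⟨t, ht⟩ := exists_maximalIdeal_pow_smul_saturation_le hmax hU
  obtain ⟨c, hc⟩ := Ideal.exists_pow_inf_eq_pow_smul (maximalIdeal R) (U.saturation p)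
  refine ⟨c + t, ?_⟩
  rw [hc (c + t) (by omega), Nat.add_sub_cancel_left]
  exact (smul_mono_right _ inf_le_right).trans ht

end OneDimensional

theorem IsPrecomplete.of_finite {R M : Type*} [CommRing R] [AddCommGroup M] [Module R M]
    (I : Ideal R) [IsPrecomplete I R] [Module.Finite R M] : IsPrecomplete I M := by
  rw [← AdicCompletion.of_surjective_iff]
  intro y
  obtain ⟨t, rfl⟩ := AdicCompletion.ofTensorProduct_surjective_of_finite I M y
  induction t using TensorProduct.induction_on with
  | zero => exact ⟨0, by simp⟩
  | tmul r x =>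
    obtain ⟨a, rfl⟩ := AdicCompletion.of_surjective I R r
    refine ⟨a • x, ?_⟩
    rw [map_smul, AdicCompletion.ofTensorProduct_tmul, ← algebraMap_smul (AdicCompletion I R) a]
    rfl
  | add u v hu hv =>
    obtain ⟨a, ha⟩ := hu
    obtain ⟨b, hb⟩ := hv
    exact ⟨a + b, by simp [ha, hb]⟩

theorem IsPrecomplete.exists_sub_mem_and_forall_mem_sup {R M : Type*} [CommRing R]
    [AddCommGroup M] [Module R M] {I : Ideal R} [IsPrecomplete I M] {W : ℕ → Submodule R M}
    (hW : ∀ j, W j ≤ W (j + 1) ⊔ I ^ j • ⊤) {k : ℕ} {x : M} (hx : x ∈ W k) :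
    ∃ y, x - y ∈ I ^ k • (⊤ : Submodule R M) ∧ ∀ i, y ∈ W (k + i) ⊔ I ^ i • ⊤ := by
  have hstep : ∀ j, ∀ z ∈ W j, ∃ z' ∈ W (j + 1), z - z' ∈ I ^ j • (⊤ : Submodule R M) := by
    intro j z hz
    obtain ⟨a, ha, b, hb, rfl⟩ := mem_sup.mp (hW j hz)
    exact ⟨a, ha, by simpa using hb⟩
  choose! next hnextW hnext using hstep
  let f : ℕ → M := fun i => Nat.rec x (fun i z => next (k + i) z) i
  have hfW : ∀ i, f i ∈ W (k + i) := by
    intro i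
    induction i with
    | zero => exact hx
    | succ i ih => exact hnextW _ _ ih
  have hf : ∀ i, f i - f (i + 1) ∈ I ^ (k + i) • (⊤ : Submodule R M) :=
    fun i => hnext _ _ (hfW i)
  have hxf : ∀ i, x - f i ∈ I ^ k • (⊤ : Submodule R M) := by
    intro i
    induction i with
    | zero => simp [f]
    | succ i ih => simpa using add_mem ih (pow_smul_top_le I M (by omega) (hf i))
  obtain ⟨y, hy⟩ := IsPrecomplete.prec ‹_› ((AdicCompletion.isAdicCauchy_iff I M f).mpr
    fun i => SModEq.sub_mem.mpr (pow_smul_top_le I M (by omega) (hf i)))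
  have hfy : ∀ i, f i - y ∈ I ^ i • (⊤ : Submodule R M) := fun i => SModEq.sub_mem.mp (hy i)
  refine ⟨y, by simpa using add_mem (hxf k) (hfy k), fun i => ?_⟩
  rw [show y = f i - (f i - y) by abel]
  exact sub_mem (mem_sup_left (hfW i)) (mem_sup_right (hfy i))

section Chevalley

variable {R M : Type*} [CommRing R] [AddCommGroup M] [Module R M]

theorem exists_sup_eq_of_antitone {Q : Submodule R M} [IsArtinian R (M ⧸ Q)]
    {F : ℕ → Submodule R M} (hF : Antitone F) : ∃ n₀, ∀ n ≥ n₀, F n ⊔ Q = F n₀ ⊔ Q := by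
  obtain ⟨n₀, hn₀⟩ := IsArtinian.monotone_stabilizes
    ⟨fun n => OrderDual.toDual ((F n).map Q.mkQ), fun _ _ h => map_mono (hF h)⟩
  refine ⟨n₀, fun n hn => ?_⟩
  simp only [sup_comm _ Q, ← comap_map_mkQ]
  exact congrArg (comap Q.mkQ ∘ OrderDual.ofDual) (hn₀ n hn).symm

variable [IsNoetherianRing R] [IsLocalRing R] [Module.Finite R M]

instance IsLocalRing.isArtinian_quotient_maximalIdeal_pow_smul_top (j : ℕ) :
    IsArtinian R (M ⧸ (maximalIdeal R ^ j • ⊤ : Submodule R M)) := by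
  rcases Nat.eq_zero_or_pos j with rfl | hj
  · rw [pow_zero, Ideal.one_eq_top, top_smul]
    infer_instance
  have : IsArtinianRing (R ⧸ maximalIdeal R ^ j) := by
    refine quotient_artinian_of_mem_minimalPrimes_of_isLocalRing _ ?_
    rw [← Ideal.radical_minimalPrimes, Ideal.radical_pow _ hj.ne',
      (maximalIdeal.isMaximal R).isPrime.radical, Ideal.minimalPrimes_eq_subsingleton_self]
    rfl
  have : Module.Finite (R ⧸ maximalIdeal R ^ j) (M ⧸ (maximalIdeal R ^ j • ⊤ : Submodule R M)) :=
    Module.Finite.of_restrictScalars_finite R _ _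
  have : IsArtinian (R ⧸ maximalIdeal R ^ j) (M ⧸ (maximalIdeal R ^ j • ⊤ : Submodule R M)) :=
    isArtinian_of_fg_of_artinian'
  exact isArtinian_of_surjective_algebraMap (R := R ⧸ maximalIdeal R ^ j)
    Ideal.Quotient.mk_surjective

theorem iInf_sup_pow_smul_top_eq {I : Ideal R} (hI : I ≠ ⊤) (N : Submodule R M) :
    ⨅ j, (N ⊔ I ^ j • ⊤) = N := by
  have h : ∀ j, N ⊔ I ^ j • ⊤ = (I ^ j • ⊤ : Submodule R (M ⧸ N)).comap N.mkQ := fun j => by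
    rw [← comap_map_mkQ, map_smul'', Submodule.map_top, range_mkQ]
  simp_rw [h, ← Submodule.comap_iInf, Ideal.iInf_pow_smul_eq_bot_of_isLocalRing I hI]
  exact N.ker_mkQ

/-- **Chevalley's lemma.** The images of the `F n` in each Artinian module `M ⧸ 𝔪 ^ j • M`
stabilize. If no `F n` lay in `𝔪 ^ k • M`, completeness would correct an element of the stable
image outside `𝔪 ^ k • M` to an element of every `F n`, hence to `0`, congruent to it
modulo `𝔪 ^ k`. -/
theorem exists_le_maximalIdeal_pow_smul_top_of_iInf_eq_bot [IsPrecomplete (maximalIdeal R) M]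
    {F : ℕ → Submodule R M} (hF : Antitone F) (hbot : ⨅ n, F n = ⊥) (k : ℕ) :
    ∃ n, F n ≤ maximalIdeal R ^ k • ⊤ := by
  by_contra! hk
  choose n₀ hn₀ using fun j => exists_sup_eq_of_antitone (Q := maximalIdeal R ^ j • ⊤) hF
  set W := fun j => F (n₀ j) ⊔ maximalIdeal R ^ j • ⊤
  have hWF : ∀ j n, W j ≤ F n ⊔ maximalIdeal R ^ j • ⊤ := by
    intro j n
    rcases le_total n (n₀ j) with h | h
    · exact sup_le_sup_right (hF h) _
    · exact (hn₀ j n h).ge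
  have hW : ∀ j, W j ≤ W (j + 1) ⊔ maximalIdeal R ^ j • ⊤ := fun j =>
    (hWF j (max (n₀ j) (n₀ (j + 1)))).trans <| sup_le_sup_right
      (le_sup_left.trans (hn₀ (j + 1) _ (le_max_right _ _)).le) _
  obtain ⟨x, hxF, hxk⟩ := SetLike.not_le_iff_exists.mp (hk (n₀ k))
  obtain ⟨y, hxy, hy⟩ :=
    IsPrecomplete.exists_sub_mem_and_forall_mem_sup hW (mem_sup_left hxF : x ∈ W k)
  have hyF : ∀ n, y ∈ F n := fun n => by
    refine (iInf_sup_pow_smul_top_eq (maximalIdeal.isMaximal R).ne_top (F n)).le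
      ((mem_iInf _).mpr fun i => ?_)
    refine sup_le ((hWF (k + i) n).trans ?_) le_sup_right (hy i)
    exact sup_le_sup_left (pow_smul_top_le _ _ (by omega)) _
  have hy0 : y = 0 := by simpa [hbot] using (mem_iInf F).mpr hyF
  exact hxk (by simpa [hy0] using hxy)

end Chevalley

open IsLocalRing in
theorem stmt10_general (R : Type*) [CommRing R] [IsNoetherianRing R] [IsLocalRing R]
    [IsAdicComplete (maximalIdeal R) R]
    (N : Type*) [AddCommGroup N] [Module R N] [Module.Finite R N]
    (p : Ideal R) (hp : p.IsPrime) (hpsupp : Module.annihilator R N ≤ p)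
    (hdim : ringKrullDim (R ⧸ p) = 1) :
    symbEquivAdic R p N ↔ ∀ z ∈ associatedPrimes R N, z ≤ p := by
  have hmax : ∀ q : Ideal R, q.IsPrime → p < q → q = maximalIdeal R := fun q _ hpq =>
    eq_maximalIdeal_of_lt_of_ringKrullDim_quotient_le_one hdim.le hpq
  have hanti : Antitone fun n => (p ^ n • ⊤ : Submodule R N).saturation p :=
    fun _ _ h => saturation_mono (pow_smul_top_le p N h)
  rw [symbEquivAdic_iff hpsupp, ← iInf_saturation_pow_smul_top_eq_bot_iff]
  constructor
  · intro h
    rw [eq_bot_iff, ← Ideal.iInf_pow_smul_eq_bot_of_isLocalRing p hp.ne_top]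
    exact le_iInf fun n => (h n).elim fun m hm => (iInf_le _ m).trans hm
  · intro h n
    obtain ⟨k, hk⟩ := exists_maximalIdeal_pow_smul_top_inf_saturation_le hmax
      (le_refl (p ^ n • ⊤ : Submodule R N))
    have := IsPrecomplete.of_finite (maximalIdeal R) (M := N)
    obtain ⟨m, hm⟩ := exists_le_maximalIdeal_pow_smul_top_of_iInf_eq_bot hanti h k
    exact ⟨max m n, le_trans (le_inf ((hanti (le_max_left m n)).trans hm)
      (hanti (le_max_right m n))) hk⟩

open IsLocalRing in
theorem stmt10 (R : Type*) [CommRing R] [IsNoetherianRing R] [IsLocalRing R]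
    [IsAdicComplete (maximalIdeal R) R]
    (N : Type*) [AddCommGroup N] [Module R N] [Module.Finite R N] [Nontrivial N]
    (p : Ideal R) (hp : p.IsPrime) (hpsupp : Module.annihilator R N ≤ p)
    (hdim : ringKrullDim (R ⧸ p) = 1) :
    symbEquivAdic R p N ↔ ∀ z ∈ associatedPrimes R N, z ≤ p :=
  stmt10_general R N p hp hpsupp hdim
end
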